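/- arXiv:2501.18088 — 2 statements merged into one kernel-verified Lean document; each statement's English description precedes it below -/
import Mathlib

section
/- Let V be a finite-dimensional real normed vector space, G ⊆ V a closed convex cone, and ℓ : V → ℝ a linear functional with ℓ(x) > 0 for every x ∈ G with x ≠ 0. Let F ⊆ V be a convex cone, let H be the ℝ-linear span of F, and assume G ∩ H = {0}. Set E = {g + f : g ∈ G, f ∈ F}. Let y ∈ V be such that y + h ∉ E for every h ∈ H, and let D ⊆ V be a bounded subset. Then there exists a real number ε₀ > 0 such that for every z ∈ D, every real ε with 0 ≤ ε ≤ ε₀, and every h ∈ H, the point y + ε • z + h does not belong to E. -/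
-- norm comparison lemma
theorem aux_norm_cmp {V : Type*} [NormedAddCommGroup V] [NormedSpace ℝ V]
    [FiniteDimensional ℝ V]
    (G : Set V) (hGsmul : ∀ (t : ℝ), 0 ≤ t → ∀ x ∈ G, t • x ∈ G)
    (hGclosed : IsClosed G)
    (H : Submodule ℝ V)
    (hGH : G ∩ (H : Set V) = {0}) :
    ∃ C : ℝ, 0 < C ∧ ∀ g ∈ G, ∀ h ∈ (H : Set V), ‖g‖ ≤ C * ‖g + h‖ := by
  by_contra hc
  push_neg at hc
  have key : ∀ n : ℕ, ∃ g ∈ G, ∃ h ∈ (H : Set V), ‖g‖ = 1 ∧ ‖g + h‖ < 1 / (n + 1) := by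
    intro n
    obtain ⟨g, hg, h, hh, hlt⟩ := hc (n + 1) (by positivity)
    have hg0 : g ≠ 0 := by
      intro h0; rw [h0, norm_zero] at hlt
      exact absurd hlt (not_lt.2 (by positivity))
    have hng : (0:ℝ) < ‖g‖ := norm_pos_iff.2 hg0
    refine ⟨‖g‖⁻¹ • g, hGsmul _ (by positivity) _ hg, ‖g‖⁻¹ • h, H.smul_mem _ hh, ?_, ?_⟩
    · rw [norm_smul, norm_inv, norm_norm, inv_mul_cancel₀ hng.ne']
    · rw [← smul_add, norm_smul, norm_inv, norm_norm]
      rw [inv_mul_lt_iff₀ hng, mul_one_div, lt_div_iff₀ (by positivity)]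
      nlinarith [hlt]
  choose g hg h hh hgn hlt using key
  -- g n lies in the closed unit ball
  have hbd : ∀ n, g n ∈ Metric.closedBall (0:V) 1 := by
    intro n; simp [hgn n]
  obtain ⟨b, hb, φ, hφ, htend⟩ := tendsto_subseq_of_bounded
    (Metric.isBounded_closedBall (x := (0:V)) (r := 1)) hbd
  have hbG : b ∈ G := hGclosed.mem_of_tendsto htend
    (Filter.Eventually.of_forall fun n => hg _)
  have hbn : ‖b‖ = 1 := by
    have h1 : Filter.Tendsto (fun n => ‖g (φ n)‖) Filter.atTop (nhds ‖b‖) :=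
      (continuous_norm.tendsto b).comp htend
    have h2 : (fun n : ℕ => ‖g (φ n)‖) = fun _ => (1:ℝ) := funext fun n => hgn _
    rw [h2] at h1
    exact tendsto_nhds_unique h1 tendsto_const_nhds
  -- g+h tends to 0
  have hsum : Filter.Tendsto (fun n => g (φ n) + h (φ n)) Filter.atTop (nhds 0) := by
    rw [tendsto_iff_norm_sub_tendsto_zero]
    have hb2 : ∀ n : ℕ, ‖g (φ n) + h (φ n) - 0‖ ≤ 1 / (n + 1) := by
      intro n
      rw [sub_zero]
      refine (hlt (φ n)).le.trans ?_
      apply one_div_le_one_div_of_le (by positivity)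
      have : (n:ℝ) ≤ (φ n : ℝ) := Nat.cast_le.2 hφ.le_apply
      linarith
    exact squeeze_zero (fun n => norm_nonneg _) hb2
      tendsto_one_div_add_atTop_nhds_zero_nat
  have hhtend : Filter.Tendsto (fun n => h (φ n)) Filter.atTop (nhds (-b)) := by
    have := hsum.sub htend
    simpa using this
  have hbH : -b ∈ (H : Set V) :=
    (H.closed_of_finiteDimensional).mem_of_tendsto hhtend
      (Filter.Eventually.of_forall fun n => hh _)
  have : b ∈ ({0} : Set V) := by
    rw [← hGH]; exact ⟨hbG, by simpa using H.neg_mem hbH⟩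
  simp only [Set.mem_singleton_iff] at this
  rw [this, norm_zero] at hbn
  norm_num at hbn

theorem aux_closed {V : Type*} [NormedAddCommGroup V] [NormedSpace ℝ V]
    [FiniteDimensional ℝ V]
    (G : Set V) (hGsmul : ∀ (t : ℝ), 0 ≤ t → ∀ x ∈ G, t • x ∈ G)
    (hGclosed : IsClosed G)
    (H : Submodule ℝ V)
    (hGH : G ∩ (H : Set V) = {0}) :
    IsClosed {v : V | ∃ g ∈ G, ∃ h ∈ (H : Set V), v = g + h} := by
  obtain ⟨C, hC, hCle⟩ := aux_norm_cmp G hGsmul hGclosed H hGH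
  rw [← isSeqClosed_iff_isClosed]
  intro u v hu huv
  choose g hg h hh hgh using hu
  -- u is bounded, hence g is bounded
  obtain ⟨R, hR⟩ : ∃ R : ℝ, ∀ n, ‖u n‖ ≤ R := by
    have : Bornology.IsBounded (Set.range u) := huv.cauchySeq.isBounded_range
    obtain ⟨R, hR⟩ := this.exists_norm_le
    exact ⟨R, fun n => hR _ (Set.mem_range_self n)⟩
  have hgbd : ∀ n, g n ∈ Metric.closedBall (0:V) (C * R) := by
    intro n
    rw [Metric.mem_closedBall, dist_zero_right]
    calc ‖g n‖ ≤ C * ‖g n + h n‖ := hCle _ (hg n) _ (hh n)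
      _ = C * ‖u n‖ := by rw [← hgh n]
      _ ≤ C * R := by nlinarith [hR n, norm_nonneg (u n)]
  obtain ⟨b, hb, φ, hφ, htend⟩ := tendsto_subseq_of_bounded
    (Metric.isBounded_closedBall (x := (0:V)) (r := C * R)) hgbd
  have hbG : b ∈ G := hGclosed.mem_of_tendsto htend
    (Filter.Eventually.of_forall fun n => hg _)
  have hutend : Filter.Tendsto (fun n => u (φ n)) Filter.atTop (nhds v) :=
    huv.comp hφ.tendsto_atTop
  have hhtend : Filter.Tendsto (fun n => h (φ n)) Filter.atTop (nhds (v - b)) := by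
    have : (fun n => h (φ n)) = fun n => u (φ n) - g (φ n) := by
      funext n; rw [hgh (φ n)]; abel
    rw [this]
    exact hutend.sub htend
  have hvb : v - b ∈ (H : Set V) :=
    (H.closed_of_finiteDimensional).mem_of_tendsto hhtend
      (Filter.Eventually.of_forall fun n => hh _)
  exact ⟨b, hbG, v - b, hvb, by abel⟩

/-- abstract form of Lemma 3.4 of the paper: stability of
non-membership in the cone `E = G + F` under small bounded perturbations
modulo the span `H` of `F`. -/
theorem stmt_4 {V : Type*} [NormedAddCommGroup V] [NormedSpace ℝ V]
    [FiniteDimensional ℝ V]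
    (G : Set V)
    (hG0 : (0 : V) ∈ G)
    (hGadd : ∀ x ∈ G, ∀ y ∈ G, x + y ∈ G)
    (hGsmul : ∀ (t : ℝ), 0 ≤ t → ∀ x ∈ G, t • x ∈ G)
    (hGclosed : IsClosed G)
    (ℓ : V →ₗ[ℝ] ℝ) (hpos : ∀ x ∈ G, x ≠ 0 → 0 < ℓ x)
    (F : Set V)
    (hF0 : (0 : V) ∈ F)
    (hFadd : ∀ x ∈ F, ∀ y ∈ F, x + y ∈ F)
    (hFsmul : ∀ (t : ℝ), 0 ≤ t → ∀ x ∈ F, t • x ∈ F)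
    (H : Submodule ℝ V) (hH : H = Submodule.span ℝ F)
    (hGH : G ∩ (H : Set V) = {0})
    (E : Set V) (hE : E = {v : V | ∃ g ∈ G, ∃ f ∈ F, v = g + f})
    (y : V) (hy : ∀ h ∈ H, y + h ∉ E)
    (D : Set V) (hD : Bornology.IsBounded D) :
    ∃ ε₀ : ℝ, 0 < ε₀ ∧
      ∀ z ∈ D, ∀ ε : ℝ, 0 ≤ ε → ε ≤ ε₀ → ∀ h ∈ H, y + ε • z + h ∉ E := by
  set S : Set V := {v : V | ∃ g ∈ G, ∃ h ∈ (H : Set V), v = g + h} with hS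
  have hSclosed : IsClosed S := aux_closed G hGsmul hGclosed H hGH
  have hyS : y ∉ S := by
    rintro ⟨g, hg, h, hh, rfl⟩
    apply hy (-h) (H.neg_mem hh)
    rw [hE]
    exact ⟨g, hg, 0, hF0, by abel⟩
  -- distance from y to S is positive
  obtain ⟨δ, hδ, hball⟩ : ∃ δ > 0, Metric.ball y δ ∩ S = ∅ := by
    have : y ∈ Sᶜ := hyS
    obtain ⟨δ, hδ, hb⟩ := Metric.isOpen_iff.1 hSclosed.isOpen_compl y this
    exact ⟨δ, hδ, Set.eq_empty_of_forall_notMem fun v ⟨hv1, hv2⟩ => hb hv1 hv2⟩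
  obtain ⟨M₀, hM₀⟩ := hD.exists_norm_le
  set M : ℝ := max M₀ 0 with hMdef
  have hM : ∀ z ∈ D, ‖z‖ ≤ M := fun z hz => (hM₀ z hz).trans (le_max_left _ _)
  have hM0 : (0:ℝ) ≤ M := le_max_right _ _
  refine ⟨δ / (2 * (M + 1)), by positivity, ?_⟩
  intro z hz ε hε0 hεle h hh hmem
  -- from membership, y + ε • z ∈ S
  have hzS : y + ε • z ∈ S := by
    rw [hE] at hmem
    obtain ⟨g, hg, f, hf, heq⟩ := hmem
    refine ⟨g, hg, f - h, H.sub_mem (hH ▸ Submodule.subset_span hf) hh, ?_⟩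
    have : y + ε • z + h = g + f := heq
    linear_combination (norm := abel) this
  -- but y + ε • z is within δ of y
  have hMz : ‖z‖ ≤ M := hM z hz
  have hdist : y + ε • z ∈ Metric.ball y δ := by
    rw [Metric.mem_ball, dist_eq_norm]
    have : ‖y + ε • z - y‖ = ε * ‖z‖ := by
      rw [add_sub_cancel_left, norm_smul, Real.norm_of_nonneg hε0]
    rw [this]
    calc ε * ‖z‖ ≤ (δ / (2 * (M + 1))) * M := by
          apply mul_le_mul hεle hMz (norm_nonneg z) (by positivity)
      _ < δ := by
          rw [div_mul_eq_mul_div, div_lt_iff₀ (by positivity)]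
          nlinarith
  exact Set.eq_empty_iff_forall_notMem.1 hball (y + ε • z) ⟨hdist, hzS⟩
end

section
/- Let L be a lattice in which every nonempty subset has a maximal element (equivalently, L satisfies the ascending chain condition: the relation > is well-founded). Let m : L → ℝ be a function satisfying m(a ⊔ b) + m(a ⊓ b) = m(a) + m(b) for all a, b ∈ L, and let r : L → ℕ be a monotone function (a ≤ b implies r(a) ≤ r(b)) such that whenever a ≤ b and r(a) = r(b), one has m(a) ≤ m(b). Then the set {m(a) : a ∈ L} is bounded above in ℝ. -/
/-- lattice-theoretic core of Lemma 4.3 of the paper: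
a modular function on a lattice with the maximal-element property, controlled
by a monotone rank function, is bounded above. -/
theorem stmt_5 {L : Type*} [Lattice L]
    (hmax : ∀ S : Set L, S.Nonempty → ∃ a ∈ S, ∀ b ∈ S, a ≤ b → b = a)
    (m : L → ℝ)
    (hmod : ∀ a b : L, m (a ⊔ b) + m (a ⊓ b) = m a + m b)
    (r : L → ℕ) (hr : Monotone r)
    (hmr : ∀ a b : L, a ≤ b → r a = r b → m a ≤ m b) :
    BddAbove (Set.range m) := by
  rcases isEmpty_or_nonempty L with h | h
  · exact ⟨0, by rintro x ⟨a, rfl⟩; exact (h.false a).elim⟩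
  have key : ∀ k : ℕ, ∀ c : L, r c ≤ k → ∃ M : ℝ, ∀ x ≤ c, m x ≤ M := by
    intro k
    induction k using Nat.strong_induction_on with
    | _ k ih =>
      intro c hc
      by_cases hU : ∃ x, x ≤ c ∧ r x < r c
      · obtain ⟨d, hd, hdmax⟩ := hmax {x | x ≤ c ∧ r x < r c} ⟨hU.choose, hU.choose_spec⟩
        obtain ⟨M, hM⟩ := ih (r d) (lt_of_lt_of_le hd.2 hc) d le_rfl
        refine ⟨max (m c) (max M (m c + M - m d)), ?_⟩
        intro x hx
        rcases eq_or_lt_of_le (hr hx) with he | hlt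
        · exact le_trans (hmr x c hx he) (le_max_left _ _)
        · by_cases hxd : r (x ⊔ d) < r c
          · have hsd : x ⊔ d = d := hdmax _ ⟨sup_le hx hd.1, hxd⟩ le_sup_right
            have hxle : x ≤ d := le_sup_left.trans hsd.le
            exact le_trans (hM x hxle) (le_trans (le_max_left _ _) (le_max_right _ _))
          · have h1 : r (x ⊔ d) = r c :=
              le_antisymm (hr (sup_le hx hd.1)) (not_lt.1 hxd)
            have h2 : m (x ⊔ d) ≤ m c := hmr _ _ (sup_le hx hd.1) h1
            have h3 : m (x ⊓ d) ≤ M := hM _ inf_le_right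
            have h4 := hmod x d
            have h5 : m x ≤ m c + M - m d := by linarith
            exact le_trans h5 (le_trans (le_max_right _ _) (le_max_right _ _))
      · push_neg at hU
        exact ⟨m c, fun x hx => hmr x c hx (le_antisymm (hr hx) (hU x hx))⟩
  obtain ⟨t, -, ht⟩ := hmax Set.univ ⟨Classical.arbitrary L, trivial⟩
  have htop : ∀ b : L, b ≤ t := by
    intro b
    have h1 : t ⊔ b = t := ht (t ⊔ b) trivial le_sup_left
    calc b ≤ t ⊔ b := le_sup_right
    _ = t := h1
  obtain ⟨M, hM⟩ := key (r t) t le_rfl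
  exact ⟨M, by rintro x ⟨a, rfl⟩; exact hM a (htop a)⟩
end
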